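/- Let E = ℝⁿ, let 0 ≤ L < 1, and let G : E → E be L-Lipschitz. Then there exists a unique function F : E → E satisfying x − F x = G(x + F x) for all x ∈ E, and this F is bijective. -/

import Mathlib

/-!
Write the defining relation as `x - v = G (x + v)` with `v = F x`. For fixed `x` its solutions `v`
are the fixed points of the contraction `v ↦ x - G (x + v)`, so there is exactly one, which
determines `F`. For fixed `v` its solutions `x` are the fixed points of the contraction
`x ↦ v + G (x + v)`, so every value `v` is taken by `F` exactly once.
-/

open Function NNReal

theorem existsUnique_forall_apply_of_existsUnique {α β : Type*} {P : α → β → Prop}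
    (h : ∀ a, ∃! b, P a b) : ∃! f : α → β, ∀ a, P a (f a) := by
  choose f hf hunique using h
  exact ⟨f, hf, fun g hg => funext fun a => hunique a _ (hg a)⟩

theorem bijective_of_forall_apply_of_existsUnique {α β : Type*} {P : α → β → Prop}
    (h₁ : ∀ a, ∃! b, P a b) (h₂ : ∀ b, ∃! a, P a b) {f : α → β} (hf : ∀ a, P a (f a)) :
    Bijective f := by
  have hgraph : ∀ a b, f a = b ↔ P a b := fun a b =>
    ⟨fun h => h ▸ hf a, fun h => (h₁ a).unique (hf a) h⟩
  exact (bijective_iff_existsUnique f).2 fun b => (existsUnique_congr (hgraph · b)).2 (h₂ b)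

theorem ContractingWith.existsUnique_isFixedPt {α : Type*} [MetricSpace α] [Nonempty α]
    [CompleteSpace α] {K : ℝ≥0} {f : α → α} (hf : ContractingWith K f) : ∃! x, IsFixedPt f x :=
  ⟨fixedPoint f hf, hf.fixedPoint_isFixedPt, fun _ => hf.fixedPoint_unique⟩

theorem contractingWith_of_norm_sub_le {E : Type*} [NormedAddCommGroup E] {L : ℝ}
    {G : E → E} (hL : L < 1) (hG : ∀ x y, ‖G x - G y‖ ≤ L * ‖x - y‖) :
    ContractingWith L.toNNReal G :=
  ⟨Real.toNNReal_lt_one.2 hL, LipschitzWith.of_dist_le' fun x y => by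
    simpa only [dist_eq_norm] using hG x y⟩

namespace ContractingWith

variable {E : Type*} [NormedAddCommGroup E] [CompleteSpace E] {K : ℝ≥0} {G : E → E}

theorem existsUnique_sub_eq_apply_add (hG : ContractingWith K G) (x : E) :
    ∃! v, x - v = G (x + v) := by
  have hc : ContractingWith K fun v => x - G (x + v) :=
    ⟨hG.1, LipschitzWith.of_dist_le_mul fun v w => by
      simpa only [dist_sub_left, dist_add_left] using hG.2.dist_le_mul (x + v) (x + w)⟩
  refine (existsUnique_congr fun v => ?_).1 hc.existsUnique_isFixedPt
  rw [IsFixedPt, sub_eq_iff_eq_add', sub_eq_iff_eq_add, add_comm, eq_comm]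

theorem existsUnique_sub_eq_apply_add_right (hG : ContractingWith K G) (v : E) :
    ∃! x, x - v = G (x + v) := by
  have hc : ContractingWith K fun x => v + G (x + v) :=
    ⟨hG.1, LipschitzWith.of_dist_le_mul fun x y => by
      simpa only [dist_add_left, dist_add_right] using hG.2.dist_le_mul (x + v) (y + v)⟩
  refine (existsUnique_congr fun x => ?_).1 hc.existsUnique_isFixedPt
  rw [IsFixedPt, sub_eq_iff_eq_add', eq_comm]

end ContractingWith

theorem monotone_formulation_exists_unique_bijective
    (n : ℕ) (L : ℝ) (hL1 : L < 1)
    (G : EuclideanSpace ℝ (Fin n) → EuclideanSpace ℝ (Fin n))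
    (hG : ∀ x y, ‖G x - G y‖ ≤ L * ‖x - y‖) :
    (∃! F : EuclideanSpace ℝ (Fin n) → EuclideanSpace ℝ (Fin n),
        ∀ x, x - F x = G (x + F x)) ∧
      ∀ F : EuclideanSpace ℝ (Fin n) → EuclideanSpace ℝ (Fin n),
        (∀ x, x - F x = G (x + F x)) → Function.Bijective F := by
  have hc := contractingWith_of_norm_sub_le hL1 hG
  exact ⟨existsUnique_forall_apply_of_existsUnique hc.existsUnique_sub_eq_apply_add,
    fun _ hF => bijective_of_forall_apply_of_existsUnique hc.existsUnique_sub_eq_apply_add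
      hc.existsUnique_sub_eq_apply_add_right hF⟩
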